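/- arXiv:2203.04922 — 3 statements merged into one kernel-verified Lean document; each statement's English description precedes it below -/
import Mathlib

section
/- For every real r > 1 there exists a constant C_r > 0 with the following property: for every τ ≥ 0 and all a, b : ℤ² → [0,∞], the convolution (a⋆b)(k) := ∑_{j∈ℤ²} a(j)·b(k−j) satisfies (∑_{k∈ℤ²} ‖k‖^{2r} e^{2τ‖k‖} ((a⋆b)(k))²)^{1/2} ≤ C_r · (a(0) + S_{r,τ}(a)) · (b(0) + S_{r,τ}(b)), the inequality being interpreted in the extended nonnegative reals. (This is the Fourier-coefficient form of the analytic-Gevrey algebra property ‖A^r e^{τA}(fg)‖_{L²_x} ≤ C_r(|f̂₀| + ‖A^r e^{τA} f‖_{L²_x})(|ĝ₀| + ‖A^r e^{τA} g‖_{L²_x}).) -/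
open scoped ENNReal

noncomputable section

/-- Euclidean norm of a lattice point `k ∈ ℤ²` viewed as a vector in `ℝ²`. -/
def nz (k : ℤ × ℤ) : ℝ := Real.sqrt ((k.1 : ℝ) ^ 2 + (k.2 : ℝ) ^ 2)

/-- The weighted ℓ²-norm `S_{ρ,τ}(a) = (∑_k ‖k‖^{2ρ} e^{2τ‖k‖} a(k)²)^{1/2}`,
valued in the extended nonnegative reals. -/
def S (ρ τ : ℝ) (a : ℤ × ℤ → ℝ≥0∞) : ℝ≥0∞ :=
  (∑' k : ℤ × ℤ, ENNReal.ofReal (nz k ^ (2 * ρ) * Real.exp (2 * τ * nz k)) * (a k) ^ 2)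
    ^ ((1 : ℝ) / 2)

/-!
With `‖·‖` the Euclidean norm, put `w(k) = ‖k‖^r e^{τ‖k‖}` and `e(k) = e^{τ‖k‖}`. The triangle
inequality and convexity of `t ↦ t^r` give `w(j + m) ≤ 2^{r-1} (w(j) e(m) + e(j) w(m))`, so
`w · (a ⋆ b) ≤ 2^{r-1} ((w a) ⋆ (e b) + (e a) ⋆ (w b))`, and Young's inequality `ℓ¹ ⋆ ℓ² ⊆ ℓ²`
bounds the right side by `2^{r-1} (‖e b‖₁ ‖w a‖₂ + ‖e a‖₁ ‖w b‖₂)`. Since `e(k) = ‖k‖^{-r} w(k)`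
for `k ≠ 0`, Cauchy–Schwarz gives `‖e a‖₁ ≤ a(0) + K_r ‖w a‖₂` with
`K_r² = ∑_{k ≠ 0} ‖k‖^{-2r}`, which is finite because `2r > 2`.
-/

def l2Norm {ι : Type*} (f : ι → ℝ≥0∞) : ℝ≥0∞ := (∑' i, f i ^ 2) ^ ((1 : ℝ) / 2)

section L2

variable {ι : Type*}

lemma rpow_half_sq (x : ℝ≥0∞) : (x ^ ((1 : ℝ) / 2)) ^ 2 = x := by
  rw [← ENNReal.rpow_natCast, ← ENNReal.rpow_mul]; norm_num

lemma l2Norm_sq (f : ι → ℝ≥0∞) : l2Norm f ^ 2 = ∑' i, f i ^ 2 := rpow_half_sq _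

lemma l2Norm_le_iff {f : ι → ℝ≥0∞} {c : ℝ≥0∞} : l2Norm f ≤ c ↔ ∑' i, f i ^ 2 ≤ c ^ 2 := by
  rw [← ENNReal.pow_le_pow_left_iff two_ne_zero, l2Norm_sq]

lemma l2Norm_eq_iSup (f : ι → ℝ≥0∞) :
    l2Norm f = ⨆ s : Finset ι, (∑ i ∈ s, f i ^ 2) ^ ((1 : ℝ) / 2) := by
  rw [l2Norm, ENNReal.tsum_eq_iSup_sum]
  exact (ENNReal.orderIsoRpow ((1 : ℝ) / 2) (by norm_num)).map_iSup _

lemma l2Norm_mono {f g : ι → ℝ≥0∞} (h : ∀ i, f i ≤ g i) : l2Norm f ≤ l2Norm g := by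
  unfold l2Norm; gcongr with i; exact h i

lemma l2Norm_const_mul (c : ℝ≥0∞) (f : ι → ℝ≥0∞) :
    l2Norm (fun i => c * f i) = c * l2Norm f := by
  simp only [l2Norm, mul_pow, ENNReal.tsum_mul_left]
  rw [ENNReal.mul_rpow_of_nonneg _ _ (by norm_num), ← ENNReal.rpow_natCast, ← ENNReal.rpow_mul]
  norm_num

lemma rpow_half_sum_sq_le_l2Norm (s : Finset ι) (f : ι → ℝ≥0∞) :
    (∑ i ∈ s, f i ^ 2) ^ ((1 : ℝ) / 2) ≤ l2Norm f := by
  unfold l2Norm; gcongr; exact ENNReal.sum_le_tsum s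

lemma tsum_mul_le_l2Norm_mul_l2Norm (f g : ι → ℝ≥0∞) :
    ∑' i, f i * g i ≤ l2Norm f * l2Norm g := by
  rw [ENNReal.tsum_eq_iSup_sum]
  refine iSup_le fun s => (ENNReal.inner_le_Lp_mul_Lq s f g Real.HolderConjugate.two_two).trans ?_
  simp only [ENNReal.rpow_two]
  gcongr <;> exact rpow_half_sum_sq_le_l2Norm s _

lemma l2Norm_add_le (f g : ι → ℝ≥0∞) : l2Norm (fun i => f i + g i) ≤ l2Norm f + l2Norm g := by
  rw [l2Norm_eq_iSup]
  refine iSup_le fun s => ?_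
  have := ENNReal.Lp_add_le s f g one_le_two
  simp only [ENNReal.rpow_two] at this
  refine this.trans ?_
  gcongr <;> exact rpow_half_sum_sq_le_l2Norm s _

lemma sq_tsum_mul_le (w f : ι → ℝ≥0∞) :
    (∑' i, w i * f i) ^ 2 ≤ (∑' i, w i) * ∑' i, w i * f i ^ 2 := by
  rw [ENNReal.tsum_eq_iSup_sum, ENNReal.iSup_pow]
  refine iSup_le fun s => ?_
  calc (∑ i ∈ s, w i * f i) ^ 2
      ≤ ((∑ i ∈ s, w i) ^ (1 - (2 : ℝ)⁻¹) * (∑ i ∈ s, w i * f i ^ (2 : ℝ)) ^ (2 : ℝ)⁻¹) ^ 2 := by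
        gcongr; exact ENNReal.inner_le_weight_mul_Lp_of_nonneg s one_le_two w f
    _ = (∑ i ∈ s, w i) * ∑ i ∈ s, w i * f i ^ 2 := by
        rw [show (1 - (2 : ℝ)⁻¹) = 1 / 2 by norm_num]
        simp only [ENNReal.rpow_two, ← one_div, mul_pow, rpow_half_sq]
    _ ≤ (∑' i, w i) * ∑' i, w i * f i ^ 2 := by gcongr <;> exact ENNReal.sum_le_tsum s

end L2

section Convolution

variable {G : Type*} [AddCommGroup G]

def discreteConv (f g : G → ℝ≥0∞) (k : G) : ℝ≥0∞ := ∑' j, f j * g (k - j)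

lemma l2Norm_discreteConv_le (f g : G → ℝ≥0∞) :
    l2Norm (discreteConv f g) ≤ (∑' j, f j) * l2Norm g := by
  rw [l2Norm_le_iff, mul_pow, l2Norm_sq]
  calc ∑' k, discreteConv f g k ^ 2
      ≤ ∑' k, (∑' j, f j) * ∑' j, f j * g (k - j) ^ 2 :=
        ENNReal.tsum_le_tsum fun k => sq_tsum_mul_le _ _
    _ = (∑' j, f j) * ∑' j, f j * ∑' k, g (k - j) ^ 2 := by
        rw [ENNReal.tsum_mul_left, ENNReal.tsum_comm]
        simp only [ENNReal.tsum_mul_left]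
    _ = (∑' j, f j) ^ 2 * ∑' k, g k ^ 2 := by
        have shift (j : G) : ∑' k, g (k - j) ^ 2 = ∑' k, g k ^ 2 :=
          (Equiv.subRight j).tsum_eq fun k => g k ^ 2
        simp only [shift, ENNReal.tsum_mul_right]
        ring

lemma discreteConv_comm (f g : G → ℝ≥0∞) : discreteConv f g = discreteConv g f := by
  ext k
  rw [discreteConv, ← (Equiv.subLeft k).tsum_eq]
  simp [discreteConv, mul_comm]

lemma mul_discreteConv_le {w e : G → ℝ≥0∞} {D : ℝ≥0∞}
    (h : ∀ j m, w (j + m) ≤ D * (w j * e m + e j * w m)) (a b : G → ℝ≥0∞) (k : G) :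
    w k * discreteConv a b k
      ≤ D * (discreteConv (w * a) (e * b) k + discreteConv (e * a) (w * b) k) := by
  simp only [discreteConv, ← ENNReal.tsum_mul_left, ← ENNReal.tsum_add]
  refine ENNReal.tsum_le_tsum fun j => ?_
  calc w k * (a j * b (k - j))
      ≤ D * (w j * e (k - j) + e j * w (k - j)) * (a j * b (k - j)) := by
        gcongr
        simpa using h j (k - j)
    _ = _ := by simp only [Pi.mul_apply]; ring

lemma l2Norm_mul_discreteConv_le {w e : G → ℝ≥0∞} {D : ℝ≥0∞}
    (h : ∀ j m, w (j + m) ≤ D * (w j * e m + e j * w m)) (a b : G → ℝ≥0∞) :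
    l2Norm (w * discreteConv a b)
      ≤ D * ((∑' j, (e * b) j) * l2Norm (w * a) + (∑' j, (e * a) j) * l2Norm (w * b)) := by
  calc l2Norm (w * discreteConv a b)
      ≤ l2Norm (fun k => D * (discreteConv (w * a) (e * b) k + discreteConv (e * a) (w * b) k)) :=
        l2Norm_mono (mul_discreteConv_le h a b)
    _ ≤ D * (l2Norm (discreteConv (e * b) (w * a)) + l2Norm (discreteConv (e * a) (w * b))) := by
        rw [l2Norm_const_mul, discreteConv_comm (w * a)]
        gcongr
        exact l2Norm_add_le _ _
    _ ≤ _ := by gcongr <;> exact l2Norm_discreteConv_le _ _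

end Convolution

lemma nz_eq_norm (k : ℤ × ℤ) : nz k = ‖(⟨k.1, k.2⟩ : ℂ)‖ := by
  rw [nz, Complex.norm_eq_sqrt_sq_add_sq]

lemma nz_nonneg (k : ℤ × ℤ) : 0 ≤ nz k := Real.sqrt_nonneg _

@[simp] lemma nz_zero : nz 0 = 0 := by simp [nz]

lemma nz_pos {k : ℤ × ℤ} (hk : k ≠ 0) : 0 < nz k := by
  rw [nz_eq_norm, norm_pos_iff]
  contrapose! hk
  simp only [Complex.ext_iff, Complex.zero_re, Complex.zero_im, Int.cast_eq_zero] at hk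
  exact Prod.ext hk.1 hk.2

lemma nz_add_le (j m : ℤ × ℤ) : nz (j + m) ≤ nz j + nz m := by
  have h : (⟨((j + m).1 : ℝ), ((j + m).2 : ℝ)⟩ : ℂ) = ⟨j.1, j.2⟩ + ⟨m.1, m.2⟩ := by
    apply Complex.ext <;> simp
  simpa only [nz_eq_norm, h] using norm_add_le _ _

lemma summable_nz_rpow_neg {s : ℝ} (hs : 2 < s) : Summable fun k : ℤ × ℤ => nz k ^ (-s) := by
  have hsum := (finTwoArrowEquiv ℤ).symm.summable_iff.mpr
    (EisensteinSeries.summable_one_div_norm_rpow hs)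
  refine hsum.of_nonneg_of_le (fun k => Real.rpow_nonneg (nz_nonneg k) _) fun k => ?_
  rcases eq_or_ne k 0 with rfl | hk
  · rw [nz_zero, Real.zero_rpow (by linarith)]
    exact Real.rpow_nonneg (norm_nonneg _) _
  · have hx : ![k.1, k.2] ≠ 0 := by
      contrapose! hk
      exact Prod.ext (congrFun hk 0) (congrFun hk 1)
    have hle : ‖![k.1, k.2]‖ ≤ nz k := by
      refine (pi_norm_le_iff_of_nonneg (nz_nonneg k)).mpr fun i => ?_
      rw [nz_eq_norm]
      fin_cases i
      · simpa [Int.norm_eq_abs] using Complex.abs_re_le_norm ⟨k.1, k.2⟩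
      · simpa [Int.norm_eq_abs] using Complex.abs_im_le_norm ⟨k.1, k.2⟩
    exact Real.rpow_le_rpow_of_nonpos (norm_pos_iff.mpr hx) hle (by linarith)

section Weights

def gevreyWeight (r τ : ℝ) (k : ℤ × ℤ) : ℝ≥0∞ := ENNReal.ofReal (nz k ^ r * Real.exp (τ * nz k))

def expWeight (τ : ℝ) (k : ℤ × ℤ) : ℝ≥0∞ := ENNReal.ofReal (Real.exp (τ * nz k))

lemma gevreyWeight_eq {r : ℝ} (hr : 0 ≤ r) (τ : ℝ) (k : ℤ × ℤ) :
    gevreyWeight r τ k = ENNReal.ofReal (nz k) ^ r * expWeight τ k := by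
  rw [gevreyWeight, expWeight, ENNReal.ofReal_mul (Real.rpow_nonneg (nz_nonneg k) r),
    ENNReal.ofReal_rpow_of_nonneg (nz_nonneg k) hr]

lemma S_eq_l2Norm (ρ τ : ℝ) (a : ℤ × ℤ → ℝ≥0∞) : S ρ τ a = l2Norm (gevreyWeight ρ τ * a) := by
  refine congrArg (· ^ ((1 : ℝ) / 2)) (tsum_congr fun k => ?_)
  have hsq : (nz k ^ ρ * Real.exp (τ * nz k)) ^ 2 = nz k ^ (2 * ρ) * Real.exp (2 * τ * nz k) := by
    rw [mul_pow, ← Real.rpow_natCast, ← Real.rpow_mul (nz_nonneg k), ← Real.exp_nat_mul]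
    ring_nf
  rw [Pi.mul_apply, mul_pow, gevreyWeight, ← ENNReal.ofReal_pow
    (mul_nonneg (Real.rpow_nonneg (nz_nonneg k) ρ) (Real.exp_nonneg _)), hsq]

lemma expWeight_zero (τ : ℝ) : expWeight τ 0 = 1 := by simp [expWeight]

lemma expWeight_add_le {τ : ℝ} (hτ : 0 ≤ τ) (j m : ℤ × ℤ) :
    expWeight τ (j + m) ≤ expWeight τ j * expWeight τ m := by
  rw [expWeight, expWeight, expWeight, ← ENNReal.ofReal_mul (Real.exp_nonneg _), ← Real.exp_add,
    ← mul_add]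
  gcongr
  exact nz_add_le j m

lemma gevreyWeight_add_le {r τ : ℝ} (hr : 1 ≤ r) (hτ : 0 ≤ τ) (j m : ℤ × ℤ) :
    gevreyWeight r τ (j + m) ≤
      2 ^ (r - 1) * (gevreyWeight r τ j * expWeight τ m + expWeight τ j * gevreyWeight r τ m) := by
  have hr0 : 0 ≤ r := zero_le_one.trans hr
  simp only [gevreyWeight_eq hr0]
  calc ENNReal.ofReal (nz (j + m)) ^ r * expWeight τ (j + m)
      ≤ (ENNReal.ofReal (nz j) + ENNReal.ofReal (nz m)) ^ r * (expWeight τ j * expWeight τ m) := by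
        gcongr
        · exact (ENNReal.ofReal_le_ofReal (nz_add_le j m)).trans ENNReal.ofReal_add_le
        · exact expWeight_add_le hτ j m
    _ ≤ 2 ^ (r - 1) * (ENNReal.ofReal (nz j) ^ r + ENNReal.ofReal (nz m) ^ r)
          * (expWeight τ j * expWeight τ m) := by
        gcongr
        exact ENNReal.rpow_add_le_mul_rpow_add_rpow _ _ hr
    _ = _ := by ring

lemma tsum_expWeight_mul_le (r τ : ℝ) (a : ℤ × ℤ → ℝ≥0∞) :
    ∑' k, (expWeight τ * a) k
      ≤ a 0 + l2Norm (fun k => ENNReal.ofReal (nz k ^ (-r))) * l2Norm (gevreyWeight r τ * a) := by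
  rw [ENNReal.tsum_eq_add_tsum_ite 0, Pi.mul_apply, expWeight_zero, one_mul]
  gcongr
  refine (ENNReal.tsum_le_tsum fun k => ?_).trans (tsum_mul_le_l2Norm_mul_l2Norm _ _)
  split_ifs with hk
  · exact zero_le
  · rw [Pi.mul_apply, Pi.mul_apply, ← mul_assoc, gevreyWeight, expWeight,
      ← ENNReal.ofReal_mul (Real.rpow_nonneg (nz_nonneg k) _), ← mul_assoc,
      ← Real.rpow_add (nz_pos hk), neg_add_cancel, Real.rpow_zero, one_mul]

lemma l2Norm_nz_rpow_neg_ne_top {r : ℝ} (hr : 1 < r) :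
    l2Norm (fun k => ENNReal.ofReal (nz k ^ (-r))) ≠ ⊤ := by
  have hsq (k : ℤ × ℤ) :
      ENNReal.ofReal (nz k ^ (-r)) ^ 2 = ENNReal.ofReal (nz k ^ (-(2 * r))) := by
    rw [← ENNReal.ofReal_pow (Real.rpow_nonneg (nz_nonneg k) _), ← Real.rpow_natCast,
      ← Real.rpow_mul (nz_nonneg k)]
    ring_nf
  refine ENNReal.rpow_ne_top_of_nonneg (by norm_num) ?_
  simp only [hsq]
  rw [← ENNReal.ofReal_tsum_of_nonneg (fun k => Real.rpow_nonneg (nz_nonneg k) _)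
    (summable_nz_rpow_neg (by linarith))]
  exact ENNReal.ofReal_ne_top

end Weights

lemma add_mul_le_one_add_mul_add (x y c : ℝ≥0∞) : x + c * y ≤ (1 + c) * (x + y) :=
  calc x + c * y ≤ (x + y) + c * (x + y) := by gcongr <;> simp
    _ = (1 + c) * (x + y) := by ring

/-- Fourier-coefficient form of the analytic-Gevrey algebra property
`‖A^r e^{τA}(fg)‖ ≤ C_r (|f̂₀| + ‖A^r e^{τA} f‖)(|ĝ₀| + ‖A^r e^{τA} g‖)`. -/
theorem analytic_gevrey_algebra :
    ∀ r : ℝ, 1 < r → ∃ C : ℝ, 0 < C ∧ ∀ τ : ℝ, 0 ≤ τ → ∀ a b : ℤ × ℤ → ℝ≥0∞,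
      (∑' k : ℤ × ℤ, ENNReal.ofReal (nz k ^ (2 * r) * Real.exp (2 * τ * nz k)) *
          (∑' j : ℤ × ℤ, a j * b (k - j)) ^ 2) ^ ((1 : ℝ) / 2)
        ≤ ENNReal.ofReal C * (a 0 + S r τ a) * (b 0 + S r τ b) := by
  intro r hr
  set K := l2Norm (fun k => ENNReal.ofReal (nz k ^ (-r)))
  have hK : K ≠ ⊤ := l2Norm_nz_rpow_neg_ne_top hr
  refine ⟨2 ^ (r - 1) * 2 * (1 + K.toReal), by positivity, fun τ hτ a b => ?_⟩
  have hC : ENNReal.ofReal (2 ^ (r - 1) * 2 * (1 + K.toReal)) = 2 ^ (r - 1) * 2 * (1 + K) := by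
    rw [ENNReal.ofReal_mul (by positivity), ENNReal.ofReal_mul (by positivity),
      ← ENNReal.ofReal_rpow_of_pos two_pos, ENNReal.ofReal_ofNat,
      ENNReal.ofReal_add zero_le_one ENNReal.toReal_nonneg, ENNReal.ofReal_one,
      ENNReal.ofReal_toReal hK]
  change S r τ (discreteConv a b) ≤ _
  rw [hC, S_eq_l2Norm, S_eq_l2Norm, S_eq_l2Norm]
  set Sa := l2Norm (gevreyWeight r τ * a)
  set Sb := l2Norm (gevreyWeight r τ * b)
  calc l2Norm (gevreyWeight r τ * discreteConv a b)
      ≤ 2 ^ (r - 1) * ((∑' k, (expWeight τ * b) k) * Sa + (∑' k, (expWeight τ * a) k) * Sb) :=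
        l2Norm_mul_discreteConv_le (gevreyWeight_add_le hr.le hτ) a b
    _ ≤ 2 ^ (r - 1) * ((b 0 + K * Sb) * Sa + (a 0 + K * Sa) * Sb) := by
        gcongr <;> exact tsum_expWeight_mul_le r τ _
    _ ≤ 2 ^ (r - 1) * ((1 + K) * (b 0 + Sb) * (a 0 + Sa) + (1 + K) * (a 0 + Sa) * (b 0 + Sb)) := by
        gcongr 2 ^ (r - 1) * (?_ + ?_) <;>
          exact mul_le_mul' (add_mul_le_one_add_mul_add _ _ _) le_add_self
    _ = 2 ^ (r - 1) * 2 * (1 + K) * (a 0 + Sa) * (b 0 + Sb) := by ring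
end
end

section
/- For every real r ≥ 1 there exists a constant C_r > 0 such that for every τ ≥ 0 and all real numbers ξ > 0 and η > 0, |ξ^r e^{τξ} − η^r e^{τη}| ≤ C_r |ξ − η| ( |ξ − η|^{r−1} + η^{r−1} + τ(|ξ − η|^r + η^r) e^{τ|ξ−η|} e^{τη} ). -/
/-!
By the mean value theorem, `|f ξ - f η| ≤ |ξ - η| · sup |f'|` for `f x = x ^ r * exp (τ x)`, and
`f' x = (r x ^ (r - 1) + τ x ^ r) e ^ (τ x)` is increasing, so the supremum is attained at
`M = max ξ η ≤ |ξ - η| + η`. The term `r M ^ (r - 1) e ^ (τ M)` is split by `e ^ t ≤ 1 + t e ^ t`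
into a part without exponential and a part `τ M ^ r e ^ (τ M)`; finally
`M ^ p ≤ 2 ^ p (|ξ - η| ^ p + η ^ p)` and `e ^ (τ M) ≤ e ^ (τ |ξ - η|) e ^ (τ η)`.
-/

open Real Set

lemma Real.exp_le_one_add_mul_exp (t : ℝ) : exp t ≤ 1 + t * exp t := by
  have h := mul_le_mul_of_nonneg_right (add_one_le_exp (-t)) (exp_pos t).le
  rw [← exp_add, neg_add_cancel, exp_zero] at h
  linarith

lemma Real.add_rpow_le_two_rpow_mul {a b p : ℝ} (ha : 0 ≤ a) (hb : 0 ≤ b) (hp : 0 ≤ p) :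
    (a + b) ^ p ≤ 2 ^ p * (a ^ p + b ^ p) := by
  wlog hab : a ≤ b generalizing a b
  · simpa only [add_comm] using this hb ha (le_of_not_ge hab)
  calc (a + b) ^ p ≤ (2 * b) ^ p := by gcongr; linarith
    _ = 2 ^ p * b ^ p := mul_rpow zero_le_two hb
    _ ≤ 2 ^ p * (a ^ p + b ^ p) := by gcongr; exact le_add_of_nonneg_left (rpow_nonneg ha p)

lemma hasDerivAt_rpow_mul_exp (r τ : ℝ) {x : ℝ} (hx : x ≠ 0) :
    HasDerivAt (fun x => x ^ r * exp (τ * x))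
      ((r * x ^ (r - 1) + τ * x ^ r) * exp (τ * x)) x := by
  have hexp : HasDerivAt (fun x => exp (τ * x)) (exp (τ * x) * τ) x :=
    ((hasDerivAt_id x).const_mul τ).exp.congr_deriv (by simp)
  exact ((hasDerivAt_rpow_const (Or.inl hx)).mul hexp).congr_deriv (by ring)

lemma abs_rpow_mul_exp_sub_le {r τ ξ η : ℝ} (hr : 1 ≤ r) (hτ : 0 ≤ τ) (hξ : 0 < ξ)
    (hη : 0 < η) :
    |ξ ^ r * exp (τ * ξ) - η ^ r * exp (τ * η)| ≤
      (r * max ξ η ^ (r - 1) + τ * max ξ η ^ r) * exp (τ * max ξ η) * |ξ - η| := by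
  set M := max ξ η
  have hderiv : ∀ x ∈ Ioc 0 M, HasDerivWithinAt (fun x => x ^ r * exp (τ * x))
      ((r * x ^ (r - 1) + τ * x ^ r) * exp (τ * x)) (Ioc 0 M) x :=
    fun x hx => (hasDerivAt_rpow_mul_exp r τ hx.1.ne').hasDerivWithinAt
  have hbound : ∀ x ∈ Ioc 0 M, ‖(r * x ^ (r - 1) + τ * x ^ r) * exp (τ * x)‖ ≤
      (r * M ^ (r - 1) + τ * M ^ r) * exp (τ * M) := by
    rintro x ⟨hx0, hxM⟩
    rw [norm_of_nonneg (by positivity)]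
    have : x ^ (r - 1) ≤ M ^ (r - 1) := rpow_le_rpow hx0.le hxM (by linarith)
    gcongr
  simpa only [Real.norm_eq_abs] using
    (convex_Ioc 0 M).norm_image_sub_le_of_norm_hasDerivWithin_le hderiv hbound
      ⟨hη, le_max_right ξ η⟩ ⟨hξ, le_max_left ξ η⟩

lemma rpow_le_two_rpow_mul_of_le_add {M a b p : ℝ} (hM : 0 ≤ M) (ha : 0 ≤ a) (hb : 0 ≤ b)
    (hp : 0 ≤ p) (hMab : M ≤ a + b) : M ^ p ≤ 2 ^ p * (a ^ p + b ^ p) :=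
  (rpow_le_rpow hM hMab hp).trans (add_rpow_le_two_rpow_mul ha hb hp)

lemma rpow_mul_exp_deriv_le_of_le_add {r τ M D η : ℝ} (hr : 1 ≤ r) (hτ : 0 ≤ τ) (hM : 0 ≤ M)
    (hD : 0 ≤ D) (hη : 0 ≤ η) (hMD : M ≤ D + η) :
    (r * M ^ (r - 1) + τ * M ^ r) * exp (τ * M) ≤
      (r + 1) * 2 ^ r *
        (D ^ (r - 1) + η ^ (r - 1) + τ * (D ^ r + η ^ r) * exp (τ * D) * exp (τ * η)) := by
  have hpow : M ^ (r - 1) * M = M ^ r := by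
    rw [← rpow_add_one' hM (by linarith), sub_add_cancel]
  have hM_pow : M ^ (r - 1) ≤ 2 ^ r * (D ^ (r - 1) + η ^ (r - 1)) := by
    refine (rpow_le_two_rpow_mul_of_le_add hM hD hη (by linarith) hMD).trans ?_
    gcongr
    · exact one_le_two
    · linarith
  have hM_pow_exp :
      M ^ r * exp (τ * M) ≤ 2 ^ r * (D ^ r + η ^ r) * (exp (τ * D) * exp (τ * η)) := by
    rw [← exp_add, ← mul_add]
    gcongr
    exact rpow_le_two_rpow_mul_of_le_add hM hD hη (by linarith) hMD
  calc (r * M ^ (r - 1) + τ * M ^ r) * exp (τ * M)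
      ≤ r * M ^ (r - 1) * (1 + τ * M * exp (τ * M)) + τ * M ^ r * exp (τ * M) := by
        have := mul_le_mul_of_nonneg_left (exp_le_one_add_mul_exp (τ * M))
          (by positivity : 0 ≤ r * M ^ (r - 1))
        linarith
    _ = r * M ^ (r - 1) + (r + 1) * τ * (M ^ r * exp (τ * M)) := by rw [← hpow]; ring
    _ ≤ (r + 1) * (2 ^ r * (D ^ (r - 1) + η ^ (r - 1)))
          + (r + 1) * τ * (2 ^ r * (D ^ r + η ^ r) * (exp (τ * D) * exp (τ * η))) := by
        gcongr
        linarith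
    _ = _ := by ring

/-- For every `r ≥ 1` there is `C_r > 0` such that for all `τ ≥ 0` and `ξ, η > 0`,
`|ξ^r e^{τξ} − η^r e^{τη}| ≤ C_r |ξ−η| (|ξ−η|^{r−1} + η^{r−1}
  + τ(|ξ−η|^r + η^r) e^{τ|ξ−η|} e^{τη})`. -/
theorem rpow_exp_diff_estimate :
    ∀ r : ℝ, 1 ≤ r → ∃ C : ℝ, 0 < C ∧ ∀ τ : ℝ, 0 ≤ τ → ∀ ξ η : ℝ, 0 < ξ → 0 < η →
      |ξ ^ r * Real.exp (τ * ξ) - η ^ r * Real.exp (τ * η)|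
        ≤ C * |ξ - η| * (|ξ - η| ^ (r - 1) + η ^ (r - 1)
            + τ * (|ξ - η| ^ r + η ^ r) * Real.exp (τ * |ξ - η|) * Real.exp (τ * η)) := by
  intro r hr
  refine ⟨(r + 1) * 2 ^ r, by positivity, fun τ hτ ξ η hξ hη => ?_⟩
  have hmax : max ξ η ≤ |ξ - η| + η :=
    max_le (by linarith [le_abs_self (ξ - η)]) (le_add_of_nonneg_left (abs_nonneg _))
  calc |ξ ^ r * exp (τ * ξ) - η ^ r * exp (τ * η)|
      ≤ (r * max ξ η ^ (r - 1) + τ * max ξ η ^ r) * exp (τ * max ξ η) * |ξ - η| :=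
        abs_rpow_mul_exp_sub_le hr hτ hξ hη
    _ ≤ (r + 1) * 2 ^ r * (|ξ - η| ^ (r - 1) + η ^ (r - 1)
          + τ * (|ξ - η| ^ r + η ^ r) * exp (τ * |ξ - η|) * exp (τ * η)) * |ξ - η| := by
        gcongr ?_ * _
        exact rpow_mul_exp_deriv_le_of_le_add hr hτ (hξ.le.trans (le_max_left ξ η))
          (abs_nonneg _) hη.le hmax
    _ = _ := by ring
end

section
/- Let C > 0 and M ≥ 0, and let u : [0,∞) → [0,∞) be differentiable with u(0) ≤ M and u'(t) ≤ C · u(t) · (1 + ln⁺(u(t))) for all t ≥ 0, where ln⁺(x) := max(ln x, 0). Then for all t ≥ 0, u(t) ≤ (M + e)^{exp(2Ct)}. (This is the double-exponential growth bound for the Sobolev norm of solutions of the 2D Euler equations derived from the logarithmic differential inequality.) -/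
/-!
The function `B t = exp (L * exp (2 C t))` with `L = log (M + e) ≥ 1` is a strict supersolution
wherever it could be touched from below: there `log B = L exp (2 C t) > 1`, so
`C B (1 + log B) < 2 C B log B = B'`. The fencing theorem for right derivatives then keeps
`u` below `B`, and `B t = (M + e) ^ exp (2 C t)`.
-/

open Real Set

theorem hasDerivAt_exp_mul_exp (L k t : ℝ) :
    HasDerivAt (fun s => exp (L * exp (k * s)))
      (k * L * exp (k * t) * exp (L * exp (k * t))) t := by
  have hlin : HasDerivAt (fun s => k * s) k t := by
    simpa using (hasDerivAt_id t).const_mul k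
  convert ((hlin.exp).const_mul L).exp using 1
  ring

theorem le_exp_mul_exp_of_deriv_le_mul_one_add_log {C L : ℝ} (hC : 0 < C) (hL : 1 ≤ L)
    {u u' : ℝ → ℝ} (hu0 : u 0 < exp L)
    (hderiv : ∀ t, 0 ≤ t → HasDerivWithinAt u (u' t) (Ici 0) t)
    (hineq : ∀ t, 0 ≤ t → u' t ≤ C * u t * (1 + max (log (u t)) 0))
    {t : ℝ} (ht : 0 ≤ t) : u t ≤ exp (L * exp (2 * C * t)) := by
  have hcont : ContinuousOn u (Icc 0 t) := fun x hx =>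
    (hderiv x hx.1).continuousWithinAt.mono fun _ hy => hy.1
  refine image_le_of_deriv_right_lt_deriv_boundary hcont
    (fun x hx => (hderiv x hx.1).mono (Ici_subset_Ici.2 hx.1)) (by simpa using hu0.le)
    (hasDerivAt_exp_mul_exp L (2 * C)) ?_ ⟨ht, le_rfl⟩
  intro x ⟨hx0, _⟩ htouch
  set s := L * exp (2 * C * x)
  have hx : 0 < x := by
    refine lt_of_le_of_ne hx0 fun h => ?_
    subst h
    exact hu0.ne (by simpa [s] using htouch)
  have hs : 1 < s := by
    have : 1 < exp (2 * C * x) := one_lt_exp_iff.2 (by positivity)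
    nlinarith
  calc u' x ≤ C * u x * (1 + max (log (u x)) 0) := hineq x hx0
    _ = C * exp s * (1 + s) := by rw [htouch, log_exp, max_eq_left (by linarith)]
    _ < C * exp s * (2 * s) := by gcongr; linarith
    _ = 2 * C * L * exp (2 * C * x) * exp s := by ring

theorem log_diff_ineq_double_exponential_bound_general
    (C M : ℝ) (hC : 0 < C) (hM : 0 ≤ M)
    (u u' : ℝ → ℝ)
    (hu0 : u 0 ≤ M)
    (hderiv : ∀ t : ℝ, 0 ≤ t → HasDerivWithinAt u (u' t) (Set.Ici 0) t)
    (hineq : ∀ t : ℝ, 0 ≤ t → u' t ≤ C * u t * (1 + max (Real.log (u t)) 0)) :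
    ∀ t : ℝ, 0 ≤ t → u t ≤ (M + Real.exp 1) ^ Real.exp (2 * C * t) := by
  intro t ht
  have hpos : 0 < M + exp 1 := by positivity
  have hL : 1 ≤ log (M + exp 1) := (le_log_iff_exp_le hpos).2 (by simpa using hM)
  have hu0' : u 0 < exp (log (M + exp 1)) := by
    rw [exp_log hpos]
    linarith [exp_pos 1]
  rw [rpow_def_of_pos hpos]
  exact le_exp_mul_exp_of_deriv_le_mul_one_add_log hC hL hu0' hderiv hineq ht

/-- Double-exponential growth bound for solutions of the logarithmic differential
inequality `u' ≤ C u (1 + ln⁺ u)` on `[0,∞)`: if `u(0) ≤ M` then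
`u(t) ≤ (M + e)^{exp(2Ct)}` for all `t ≥ 0`. -/
theorem log_diff_ineq_double_exponential_bound
    (C M : ℝ) (hC : 0 < C) (hM : 0 ≤ M)
    (u u' : ℝ → ℝ)
    (hu_nonneg : ∀ t : ℝ, 0 ≤ t → 0 ≤ u t)
    (hu0 : u 0 ≤ M)
    (hderiv : ∀ t : ℝ, 0 ≤ t → HasDerivWithinAt u (u' t) (Set.Ici 0) t)
    (hineq : ∀ t : ℝ, 0 ≤ t → u' t ≤ C * u t * (1 + max (Real.log (u t)) 0)) :
    ∀ t : ℝ, 0 ≤ t → u t ≤ (M + Real.exp 1) ^ Real.exp (2 * C * t) :=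
  log_diff_ineq_double_exponential_bound_general C M hC hM u u' hu0 hderiv hineq
end
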